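/- Let m > 0, λ > 0 and n ∈ ℕ with n ≥ 1. Define θ_λ(p) := √( √(ν|p|²+λ) − √λ ) for p ∈ ℝ³, let 1_n and 1_n^c denote the characteristic functions of {p : |p| ≤ n} and {p : |p| > n} respectively, and set 𝒬_{λ,n}(p,q) := λ · 1_n^c(p) 1_n^c(q) / ( θ_λ(p) G(p,q) (G(p,q)+λ) θ_λ(q) ) − 1_n^c(p) 1_n(q) / ( θ_λ(p) (G(p,q)+λ) θ_λ(q) ) − 1_n(p) 1_n^c(q) / ( θ_λ(p) (G(p,q)+λ) θ_λ(q) ) − 1_n(p) 1_n(q) / ( θ_λ(p) (G(p,q)+λ) θ_λ(q) ). Then ∬_{ℝ³×ℝ³} |𝒬_{λ,n}(p,q)|² dp dq < ∞, i.e. 𝒬_{λ,n} ∈ L²(ℝ³×ℝ³) (so the associated integral operator is Hilbert–Schmidt on L²(ℝ³)). -/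
import Mathlib

open MeasureTheory
open scoped RealInnerProductSpace

noncomputable section

abbrev E3 := EuclideanSpace ℝ (Fin 3)

def mu (m : ℝ) : ℝ := 2 / (m + 1)

def nu (m : ℝ) : ℝ := m * (m + 2) / (m + 1) ^ 2

def Gker (m : ℝ) (p q : E3) : ℝ := ‖p‖ ^ 2 + ‖q‖ ^ 2 + mu m * ⟪p, q⟫

def theta (m lam : ℝ) (p : E3) : ℝ :=
  Real.sqrt (Real.sqrt (nu m * ‖p‖ ^ 2 + lam) - Real.sqrt lam)

/-- The kernel `𝒬_{λ,n}` of the Minlos–Yoshitomi decomposition of the charge operator. -/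
def Qker (m lam : ℝ) (n : ℕ) (p q : E3) : ℝ :=
  lam * ((if (n : ℝ) < ‖p‖ then (1 : ℝ) else 0) * (if (n : ℝ) < ‖q‖ then (1 : ℝ) else 0)) /
      (theta m lam p * Gker m p q * (Gker m p q + lam) * theta m lam q)
    - (if (n : ℝ) < ‖p‖ then (1 : ℝ) else 0) * (if ‖q‖ ≤ (n : ℝ) then (1 : ℝ) else 0) /
      (theta m lam p * (Gker m p q + lam) * theta m lam q)
    - (if ‖p‖ ≤ (n : ℝ) then (1 : ℝ) else 0) * (if (n : ℝ) < ‖q‖ then (1 : ℝ) else 0) /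
      (theta m lam p * (Gker m p q + lam) * theta m lam q)
    - (if ‖p‖ ≤ (n : ℝ) then (1 : ℝ) else 0) * (if ‖q‖ ≤ (n : ℝ) then (1 : ℝ) else 0) /
      (theta m lam p * (Gker m p q + lam) * theta m lam q)

namespace QkerAux

open Set Metric

/-- The radial majorant. -/
def Hmaj (n : ℕ) (p : E3) : ℝ := if ‖p‖ ≤ (n : ℝ) then (‖p‖ ^ 2)⁻¹ else (‖p‖ ^ 5)⁻¹

lemma Hmaj_nonneg (n : ℕ) (p : E3) : 0 ≤ Hmaj n p := by
  unfold Hmaj; split <;> positivity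

lemma measurable_Hmaj (n : ℕ) : Measurable (Hmaj n) := by
  unfold Hmaj
  exact Measurable.ite (measurableSet_le measurable_norm measurable_const)
    (by fun_prop) (by fun_prop)

/-- `x ↦ ‖x‖⁻²` is integrable on balls in `ℝ³`. -/
lemma integrableOn_inv_norm_sq {R : ℝ} :
    IntegrableOn (fun x : E3 => (‖x‖ ^ 2)⁻¹) (closedBall 0 R) := by
  have hmeas : Measurable (fun x : E3 => (‖x‖ ^ 2)⁻¹) := by fun_prop
  constructor
  · exact hmeas.aestronglyMeasurable
  · have hnonneg : ∀ x : E3, 0 ≤ (‖x‖ ^ 2)⁻¹ := fun x => by positivity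
    have key : ∫⁻ x in closedBall (0:E3) R, ‖(‖x‖ ^ 2)⁻¹‖₊
        = ∫⁻ t in Ioi (0:ℝ), (volume.restrict (closedBall (0:E3) R)) {a | t ≤ (‖a‖^2)⁻¹} := by
      rw [← lintegral_eq_lintegral_meas_le _ (Filter.Eventually.of_forall hnonneg)
        hmeas.aemeasurable]
      exact lintegral_congr fun x => Real.enorm_eq_ofReal (hnonneg x)
    show (∫⁻ x in closedBall (0:E3) R, ‖(‖x‖ ^ 2)⁻¹‖₊) < ⊤
    rw [key]
    set mB := volume (ball (0:E3) 1) with hmB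
    set ν := volume.restrict (closedBall (0:E3) R) with hν
    have hlevel2 : ∀ t : ℝ, t ∈ Ioi (1:ℝ) →
        ν {a | t ≤ (‖a‖^2)⁻¹} ≤ ENNReal.ofReal (t ^ (-(3:ℝ)/2)) * mB := by
      intro t ht
      have ht0 : (0:ℝ) < t := lt_trans one_pos ht
      have hsub : {a : E3 | t ≤ (‖a‖^2)⁻¹} ⊆ closedBall 0 (t ^ (-(1:ℝ)/2)) := by
        intro a ha
        simp only [mem_setOf_eq] at ha
        rcases eq_or_ne a 0 with rfl | h0
        · rw [mem_closedBall_zero_iff, norm_zero]; positivity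
        · have hn : 0 < ‖a‖ := norm_pos_iff.mpr h0
          have h1 : ‖a‖ ^ 2 ≤ t⁻¹ := by
            rw [le_inv_comm₀ ht0 (by positivity)] at ha
            exact ha
          rw [mem_closedBall_zero_iff]
          have h2 : (‖a‖^2 : ℝ) ≤ (t ^ (-(1:ℝ)/2))^2 := by
            rw [← Real.rpow_natCast (t ^ (-(1:ℝ)/2)) 2, ← Real.rpow_mul ht0.le]
            norm_num
            rw [Real.rpow_neg_one]
            exact h1
          nlinarith [Real.rpow_nonneg ht0.le (-(1:ℝ)/2)]
      calc ν {a | t ≤ (‖a‖^2)⁻¹}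
          ≤ volume (closedBall (0:E3) (t ^ (-(1:ℝ)/2))) :=
            (Measure.restrict_apply_le _ _).trans (measure_mono hsub)
        _ = ENNReal.ofReal (t ^ (-(3:ℝ)/2)) * mB := by
            rw [Measure.addHaar_closedBall _ _ (by positivity)]
            congr 2
            rw [finrank_euclideanSpace_fin, ← Real.rpow_natCast (t ^ (-(1:ℝ)/2)) 3,
              ← Real.rpow_mul ht0.le]
            norm_num
    calc ∫⁻ t in Ioi (0:ℝ), ν {a | t ≤ (‖a‖^2)⁻¹}
        ≤ ∫⁻ t in Ioc (0:ℝ) 1 ∪ Ioi 1, ν {a | t ≤ (‖a‖^2)⁻¹} :=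
          lintegral_mono_set Ioi_subset_Ioc_union_Ioi
      _ ≤ (∫⁻ t in Ioc (0:ℝ) 1, ν {a | t ≤ (‖a‖^2)⁻¹})
            + ∫⁻ t in Ioi (1:ℝ), ν {a | t ≤ (‖a‖^2)⁻¹} := lintegral_union_le _ _ _
      _ < ⊤ := by
        refine ENNReal.add_lt_top.2 ⟨?_, ?_⟩
        · calc (∫⁻ t in Ioc (0:ℝ) 1, ν {a | t ≤ (‖a‖^2)⁻¹})
              ≤ ∫⁻ _ in Ioc (0:ℝ) 1, volume (closedBall (0:E3) R) := by
                refine lintegral_mono fun t => ?_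
                exact (measure_mono (subset_univ _)).trans
                  (le_of_eq (by rw [hν, Measure.restrict_apply_univ]))
            _ < ⊤ := by
                rw [setLIntegral_const]
                exact ENNReal.mul_lt_top measure_closedBall_lt_top (by simp [Real.volume_Ioc])
        · calc (∫⁻ t in Ioi (1:ℝ), ν {a | t ≤ (‖a‖^2)⁻¹})
              ≤ ∫⁻ t in Ioi (1:ℝ), ENNReal.ofReal (t ^ (-(3:ℝ)/2)) * mB :=
                setLIntegral_mono' measurableSet_Ioi hlevel2
            _ = (∫⁻ t in Ioi (1:ℝ), ENNReal.ofReal (t ^ (-(3:ℝ)/2))) * mB :=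
                lintegral_mul_const' _ _ measure_ball_lt_top.ne
            _ < ⊤ := by
                refine ENNReal.mul_lt_top ?_ measure_ball_lt_top
                refine IntegrableOn.setLIntegral_lt_top ?_
                exact integrableOn_Ioi_rpow_of_lt (by norm_num) one_pos

/-- The majorant is integrable on `ℝ³`. -/
lemma integrable_Hmaj (n : ℕ) (hn : 1 ≤ n) : Integrable (Hmaj n) := by
  have hmeasH : Measurable (Hmaj n) := measurable_Hmaj n
  rw [← integrableOn_univ, ← Set.union_compl_self (closedBall (0:E3) n)]
  apply IntegrableOn.union
  · refine IntegrableOn.congr_fun integrableOn_inv_norm_sq ?_ measurableSet_closedBall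
    intro x hx
    rw [mem_closedBall_zero_iff] at hx
    simp only [Hmaj, if_pos hx]
  · have hI : Integrable (fun x : E3 => 32 * (1 + ‖x‖) ^ (-(5:ℝ))) :=
      (integrable_one_add_norm (by rw [finrank_euclideanSpace_fin]; norm_num)).const_mul 32
    refine Integrable.mono' hI.restrict hmeasH.aestronglyMeasurable ?_
    rw [ae_restrict_iff' measurableSet_closedBall.compl]
    refine Filter.Eventually.of_forall fun x hx => ?_
    rw [mem_compl_iff, mem_closedBall_zero_iff] at hx
    push_neg at hx
    have h1 : (1:ℝ) ≤ ‖x‖ := le_trans (by exact_mod_cast hn) hx.le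
    have hxpos : (0:ℝ) < ‖x‖ := by linarith
    rw [Hmaj, if_neg (not_le.mpr hx), Real.norm_of_nonneg (by positivity)]
    have h2 : (1 + ‖x‖) ^ (-(5:ℝ)) = ((1 + ‖x‖) ^ (5:ℕ))⁻¹ := by
      rw [Real.rpow_neg (by positivity)]
      congr 1
      rw [show ((5:ℝ)) = ((5:ℕ):ℝ) by norm_num, Real.rpow_natCast]
    rw [h2, show (32:ℝ) * ((1 + ‖x‖) ^ (5:ℕ))⁻¹ = (((1 + ‖x‖) ^ (5:ℕ)) / 32)⁻¹ by
      rw [div_eq_mul_inv, mul_inv, inv_inv]; ring]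
    apply inv_anti₀ (by positivity)
    have h3 : (1 + ‖x‖) ^ (5:ℕ) ≤ (2 * ‖x‖) ^ (5:ℕ) :=
      pow_le_pow_left₀ (by positivity) (by linarith) 5
    nlinarith [pow_pos hxpos 5]

section PtBound

variable {m lam : ℝ} (hm : 0 < m) (hlam : 0 < lam)

omit hm hlam in
lemma sqrt_add_le'' {x y : ℝ} (hx : 0 ≤ x) (hy : 0 ≤ y) :
    Real.sqrt (x + y) ≤ Real.sqrt x + Real.sqrt y := by
  rw [← Real.sqrt_sq (by positivity : (0:ℝ) ≤ Real.sqrt x + Real.sqrt y)]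
  apply Real.sqrt_le_sqrt
  nlinarith [Real.sq_sqrt hx, Real.sq_sqrt hy, Real.sqrt_nonneg x, Real.sqrt_nonneg y]

include hm

lemma nu_pos : 0 < nu m := by
  unfold nu; positivity

lemma Gker_ge_left (p q : E3) : nu m * ‖p‖ ^ 2 ≤ Gker m p q := by
  have h : Gker m p q - nu m * ‖p‖ ^ 2 = ‖q + (mu m / 2) • p‖ ^ 2 := by
    rw [norm_add_sq_real, real_inner_smul_right, norm_smul, mul_pow, Real.norm_eq_abs,
      sq_abs, real_inner_comm]
    unfold Gker mu nu
    have h1 : m + 1 ≠ 0 := by positivity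
    field_simp
    ring
  nlinarith [sq_nonneg ‖q + (mu m / 2) • p‖]

lemma Gker_ge_right (p q : E3) : nu m * ‖q‖ ^ 2 ≤ Gker m p q := by
  have := Gker_ge_left hm q p
  have h : Gker m q p = Gker m p q := by unfold Gker; rw [real_inner_comm]; ring
  linarith

lemma Gker_nonneg (p q : E3) : 0 ≤ Gker m p q := by
  have := Gker_ge_left hm p q
  nlinarith [nu_pos hm, sq_nonneg ‖p‖]

include hlam

omit hm in
lemma theta_zero : theta m lam 0 = 0 := by
  unfold theta
  rw [norm_zero]
  norm_num

omit hm in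
lemma Qker_zero_left {n : ℕ} {p q : E3} (h : theta m lam p = 0) : Qker m lam n p q = 0 := by
  simp [Qker, h]

omit hm in
lemma Qker_zero_right {n : ℕ} {p q : E3} (h : theta m lam q = 0) : Qker m lam n p q = 0 := by
  simp [Qker, h]

lemma theta_sq (p : E3) :
    (theta m lam p) ^ 2 = Real.sqrt (nu m * ‖p‖ ^ 2 + lam) - Real.sqrt lam := by
  unfold theta
  rw [Real.sq_sqrt]
  rw [sub_nonneg]
  exact Real.sqrt_le_sqrt (by nlinarith [nu_pos hm, sq_nonneg ‖p‖])

lemma theta_sq_eq (p : E3) :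
    (theta m lam p) ^ 2 = nu m * ‖p‖ ^ 2 / (Real.sqrt (nu m * ‖p‖ ^ 2 + lam) + Real.sqrt lam) := by
  have hpos : 0 < Real.sqrt (nu m * ‖p‖ ^ 2 + lam) + Real.sqrt lam := by
    have : 0 < Real.sqrt lam := Real.sqrt_pos.mpr hlam
    have := Real.sqrt_nonneg (nu m * ‖p‖ ^ 2 + lam)
    linarith
  rw [theta_sq hm hlam, eq_div_iff hpos.ne']
  have ha : 0 ≤ nu m * ‖p‖ ^ 2 + lam := by nlinarith [nu_pos hm, sq_nonneg ‖p‖]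
  have h1 : Real.sqrt (nu m * ‖p‖ ^ 2 + lam) ^ 2 = nu m * ‖p‖ ^ 2 + lam := Real.sq_sqrt ha
  have h2 : Real.sqrt lam ^ 2 = lam := Real.sq_sqrt hlam.le
  nlinarith

omit hm in
lemma Kn_pos (n : ℕ) : 0 < Real.sqrt (nu m * (n:ℝ)^2 + lam) + Real.sqrt lam := by
  have : 0 < Real.sqrt lam := Real.sqrt_pos.mpr hlam
  have := Real.sqrt_nonneg (nu m * (n:ℝ)^2 + lam)
  linarith

omit hm in
lemma Kinf_pos : 0 < Real.sqrt (nu m) + 2 * Real.sqrt lam := by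
  have : 0 < Real.sqrt lam := Real.sqrt_pos.mpr hlam
  have := Real.sqrt_nonneg (nu m)
  linarith

lemma thetaLB_small {n : ℕ} {p : E3} (hp : ‖p‖ ≤ (n:ℝ)) :
    nu m * ‖p‖ ^ 2 / (Real.sqrt (nu m * (n:ℝ)^2 + lam) + Real.sqrt lam)
      ≤ (theta m lam p) ^ 2 := by
  rw [theta_sq_eq hm hlam]
  apply div_le_div_of_nonneg_left (mul_nonneg (nu_pos hm).le (sq_nonneg _))
  · have : 0 < Real.sqrt lam := Real.sqrt_pos.mpr hlam
    have := Real.sqrt_nonneg (nu m * ‖p‖^2 + lam)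
    linarith
  · have h : Real.sqrt (nu m * ‖p‖^2 + lam) ≤ Real.sqrt (nu m * (n:ℝ)^2 + lam) := by
      apply Real.sqrt_le_sqrt
      have : ‖p‖^2 ≤ (n:ℝ)^2 := by nlinarith [norm_nonneg p]
      nlinarith [nu_pos hm]
    linarith

lemma thetaLB_large {p : E3} (hp : 1 ≤ ‖p‖) :
    nu m * ‖p‖ / (Real.sqrt (nu m) + 2 * Real.sqrt lam) ≤ (theta m lam p) ^ 2 := by
  rw [theta_sq_eq hm hlam]
  have hS : Real.sqrt (nu m * ‖p‖^2 + lam) + Real.sqrt lam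
      ≤ (Real.sqrt (nu m) + 2 * Real.sqrt lam) * ‖p‖ := by
    have h1 : Real.sqrt (nu m * ‖p‖^2 + lam) ≤ Real.sqrt (nu m * ‖p‖^2) + Real.sqrt lam :=
      sqrt_add_le'' (mul_nonneg (nu_pos hm).le (sq_nonneg _)) hlam.le
    have h2 : Real.sqrt (nu m * ‖p‖^2) = Real.sqrt (nu m) * ‖p‖ := by
      rw [Real.sqrt_mul (nu_pos hm).le, Real.sqrt_sq (by linarith)]
    have h3 : Real.sqrt lam ≤ Real.sqrt lam * ‖p‖ := by
      nlinarith [Real.sqrt_nonneg lam]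
    nlinarith [Real.sqrt_nonneg (nu m)]
  rw [div_le_div_iff₀ (Kinf_pos (m := m) hlam) (by positivity)]
  calc nu m * ‖p‖ * (Real.sqrt (nu m * ‖p‖^2 + lam) + Real.sqrt lam)
      ≤ nu m * ‖p‖ * ((Real.sqrt (nu m) + 2 * Real.sqrt lam) * ‖p‖) := by
        apply mul_le_mul_of_nonneg_left hS
        exact mul_nonneg (nu_pos hm).le (by linarith)
    _ = nu m * ‖p‖^2 * (Real.sqrt (nu m) + 2 * Real.sqrt lam) := by ring

set_option maxHeartbeats 1000000 in
/-- The pointwise bound: `Qker² ≤ C · Hmaj(p) Hmaj(q)`. -/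
lemma Qker_sq_le (n : ℕ) (hn : 1 ≤ n) :
    ∃ C : ℝ, ∀ p q : E3, (Qker m lam n p q) ^ 2 ≤ C * (Hmaj n p * Hmaj n q) := by
  set N := nu m with hNdef
  set Kn := Real.sqrt (N * (n:ℝ)^2 + lam) + Real.sqrt lam with hKndef
  set Ki := Real.sqrt N + 2 * Real.sqrt lam with hKidef
  have hN : 0 < N := nu_pos hm
  have hKn : 0 < Kn := Kn_pos hlam n
  have hKi : 0 < Ki := Kinf_pos (m := m) hlam
  set c1 : ℝ := Kn^2 / (N^2 * lam^2) with hc1def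
  set c2 : ℝ := Ki * Kn / N^4 with hc2def
  set c4 : ℝ := lam^2 * Ki^2 / N^6 with hc4def
  have hc1 : 0 ≤ c1 := by positivity
  have hc2 : 0 ≤ c2 := by positivity
  have hc4 : 0 ≤ c4 := by positivity
  set C : ℝ := c1 + c2 + c4 with hCdef
  have hC : 0 ≤ C := by positivity
  refine ⟨C, fun p q => ?_⟩
  have hRHS : 0 ≤ C * (Hmaj n p * Hmaj n q) :=
    mul_nonneg hC (mul_nonneg (Hmaj_nonneg n p) (Hmaj_nonneg n q))
  have hn1 : (1:ℝ) ≤ (n:ℝ) := by exact_mod_cast hn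
  -- degenerate cases
  rcases eq_or_ne p 0 with rfl | hp0
  · rw [Qker_zero_left hlam (theta_zero hlam)]; simpa using hRHS
  rcases eq_or_ne q 0 with rfl | hq0
  · rw [Qker_zero_right hlam (theta_zero hlam)]; simpa using hRHS
  have hnp : 0 < ‖p‖ := norm_pos_iff.mpr hp0
  have hnq : 0 < ‖q‖ := norm_pos_iff.mpr hq0
  set a := theta m lam p with hadef
  set b := theta m lam q with hbdef
  set g := Gker m p q with hgdef
  have hG : 0 ≤ g := Gker_nonneg hm p q
  have hGp : N * ‖p‖^2 ≤ g := Gker_ge_left hm p q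
  have hGq : N * ‖q‖^2 ≤ g := Gker_ge_right hm p q
  have hc1C : c1 ≤ C := by rw [hCdef]; linarith
  have hc2C : c2 ≤ C := by rw [hCdef]; linarith
  have hc4C : c4 ≤ C := by rw [hCdef]; linarith
  rcases le_or_gt ‖p‖ (n:ℝ) with hp | hp <;> rcases le_or_gt ‖q‖ (n:ℝ) with hq | hq
  · -- both small
    have hQ : Qker m lam n p q = -(1 / (a * (g + lam) * b)) := by
      rw [Qker, if_neg (not_lt.mpr hp), if_neg (not_lt.mpr hq), if_pos hp, if_pos hq]
      ring
    have hTp := thetaLB_small hm hlam hp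
    have hTq := thetaLB_small hm hlam hq
    have hLp : 0 < N * ‖p‖^2 / Kn := by positivity
    have hLq : 0 < N * ‖q‖^2 / Kn := by positivity
    have e2 : lam^2 ≤ (g + lam)^2 := pow_le_pow_left₀ hlam.le (by linarith) 2
    calc (Qker m lam n p q)^2 = 1 / (a^2 * (g + lam)^2 * b^2) := by
          rw [hQ, neg_sq, div_pow, one_pow, mul_pow, mul_pow]
      _ ≤ 1 / ((N * ‖p‖^2 / Kn) * lam^2 * (N * ‖q‖^2 / Kn)) := by
          apply one_div_le_one_div_of_le (by positivity)
          exact mul_le_mul (mul_le_mul hTp e2 (by positivity) (sq_nonneg a)) hTq hLq.le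
            (mul_nonneg (sq_nonneg a) (sq_nonneg _))
      _ = c1 * ((‖p‖^2)⁻¹ * (‖q‖^2)⁻¹) := by
          rw [hc1def]; field_simp
      _ ≤ C * (Hmaj n p * Hmaj n q) := by
          rw [Hmaj, Hmaj, if_pos hp, if_pos hq]
          exact mul_le_mul_of_nonneg_right hc1C (by positivity)
  · -- p small, q large
    have hq1 : (1:ℝ) ≤ ‖q‖ := le_trans hn1 hq.le
    have hQ : Qker m lam n p q = -(1 / (a * (g + lam) * b)) := by
      rw [Qker, if_neg (not_lt.mpr hp), if_pos hq, if_pos hp, if_neg (not_le.mpr hq)]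
      ring
    have hTp := thetaLB_small hm hlam hp
    have hTq := thetaLB_large hm hlam hq1
    have e2 : (N * ‖q‖^2)^2 ≤ (g + lam)^2 := pow_le_pow_left₀ (by positivity) (by linarith) 2
    calc (Qker m lam n p q)^2 = 1 / (a^2 * (g + lam)^2 * b^2) := by
          rw [hQ, neg_sq, div_pow, one_pow, mul_pow, mul_pow]
      _ ≤ 1 / ((N * ‖p‖^2 / Kn) * (N * ‖q‖^2)^2 * (N * ‖q‖ / Ki)) := by
          apply one_div_le_one_div_of_le (by positivity)
          exact mul_le_mul (mul_le_mul hTp e2 (by positivity) (sq_nonneg a)) hTq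
            (by positivity) (mul_nonneg (sq_nonneg a) (sq_nonneg _))
      _ = c2 * ((‖p‖^2)⁻¹ * (‖q‖^5)⁻¹) := by
          rw [hc2def]; field_simp
      _ ≤ C * (Hmaj n p * Hmaj n q) := by
          rw [Hmaj, Hmaj, if_pos hp, if_neg (not_le.mpr hq)]
          exact mul_le_mul_of_nonneg_right hc2C (by positivity)
  · -- p large, q small
    have hp1 : (1:ℝ) ≤ ‖p‖ := le_trans hn1 hp.le
    have hQ : Qker m lam n p q = -(1 / (a * (g + lam) * b)) := by
      rw [Qker, if_pos hp, if_neg (not_lt.mpr hq), if_neg (not_le.mpr hp), if_pos hq]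
      ring
    have hTp := thetaLB_large hm hlam hp1
    have hTq := thetaLB_small hm hlam hq
    have e2 : (N * ‖p‖^2)^2 ≤ (g + lam)^2 := pow_le_pow_left₀ (by positivity) (by linarith) 2
    calc (Qker m lam n p q)^2 = 1 / (a^2 * (g + lam)^2 * b^2) := by
          rw [hQ, neg_sq, div_pow, one_pow, mul_pow, mul_pow]
      _ ≤ 1 / ((N * ‖p‖ / Ki) * (N * ‖p‖^2)^2 * (N * ‖q‖^2 / Kn)) := by
          apply one_div_le_one_div_of_le (by positivity)
          exact mul_le_mul (mul_le_mul hTp e2 (by positivity) (sq_nonneg a)) hTq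
            (by positivity) (mul_nonneg (sq_nonneg a) (sq_nonneg _))
      _ = c2 * ((‖p‖^5)⁻¹ * (‖q‖^2)⁻¹) := by
          rw [hc2def]; field_simp
      _ ≤ C * (Hmaj n p * Hmaj n q) := by
          rw [Hmaj, Hmaj, if_neg (not_le.mpr hp), if_pos hq]
          exact mul_le_mul_of_nonneg_right hc2C (by positivity)
  · -- both large
    have hp1 : (1:ℝ) ≤ ‖p‖ := le_trans hn1 hp.le
    have hq1 : (1:ℝ) ≤ ‖q‖ := le_trans hn1 hq.le
    have hQ : Qker m lam n p q = lam / (a * g * (g + lam) * b) := by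
      rw [Qker, if_pos hp, if_pos hq, if_neg (not_le.mpr hp), if_neg (not_le.mpr hq)]
      ring
    have hTp := thetaLB_large hm hlam hp1
    have hTq := thetaLB_large hm hlam hq1
    have eg : (N * ‖p‖^2) * (N * ‖q‖^2) ≤ g^2 := by
      have := mul_le_mul hGp hGq (by positivity) hG
      nlinarith [this]
    have e2 : (N * ‖p‖^2) * (N * ‖q‖^2) ≤ (g + lam)^2 :=
      le_trans eg (pow_le_pow_left₀ hG (by linarith) 2)
    calc (Qker m lam n p q)^2 = lam^2 / (a^2 * g^2 * (g + lam)^2 * b^2) := by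
          rw [hQ, div_pow, mul_pow, mul_pow, mul_pow]
      _ ≤ lam^2 / ((N * ‖p‖ / Ki) * ((N * ‖p‖^2) * (N * ‖q‖^2))
            * ((N * ‖p‖^2) * (N * ‖q‖^2)) * (N * ‖q‖ / Ki)) := by
          apply div_le_div_of_nonneg_left (sq_nonneg lam) (by positivity)
          refine mul_le_mul (mul_le_mul (mul_le_mul hTp eg (by positivity) (sq_nonneg a))
            e2 (by positivity) (mul_nonneg (sq_nonneg a) (sq_nonneg g))) hTq
            (by positivity) ?_
          exact mul_nonneg (mul_nonneg (sq_nonneg a) (sq_nonneg g)) (sq_nonneg _)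
      _ = c4 * ((‖p‖^5)⁻¹ * (‖q‖^5)⁻¹) := by
          rw [hc4def]; field_simp
      _ ≤ C * (Hmaj n p * Hmaj n q) := by
          rw [Hmaj, Hmaj, if_neg (not_le.mpr hp), if_neg (not_le.mpr hq)]
          exact mul_le_mul_of_nonneg_right hc4C (by positivity)

end PtBound

lemma measurable_Qker (m lam : ℝ) (n : ℕ) :
    Measurable (fun pq : E3 × E3 => Qker m lam n pq.1 pq.2) := by
  have hinner : Measurable (fun pq : E3 × E3 => (⟪pq.1, pq.2⟫ : ℝ)) :=
    continuous_inner.measurable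
  have hG : Measurable (fun pq : E3 × E3 => Gker m pq.1 pq.2) := by
    unfold Gker; fun_prop
  have hth1 : Measurable (fun pq : E3 × E3 => theta m lam pq.1) := by
    unfold theta; fun_prop
  have hth2 : Measurable (fun pq : E3 × E3 => theta m lam pq.2) := by
    unfold theta; fun_prop
  have hiP1 : Measurable (fun pq : E3 × E3 => if (n:ℝ) < ‖pq.1‖ then (1:ℝ) else 0) :=
    Measurable.ite (measurableSet_lt measurable_const (by fun_prop)) measurable_const
      measurable_const
  have hiP2 : Measurable (fun pq : E3 × E3 => if (n:ℝ) < ‖pq.2‖ then (1:ℝ) else 0) :=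
    Measurable.ite (measurableSet_lt measurable_const (by fun_prop)) measurable_const
      measurable_const
  have hiQ1 : Measurable (fun pq : E3 × E3 => if ‖pq.1‖ ≤ (n:ℝ) then (1:ℝ) else 0) :=
    Measurable.ite (measurableSet_le (by fun_prop) measurable_const) measurable_const
      measurable_const
  have hiQ2 : Measurable (fun pq : E3 × E3 => if ‖pq.2‖ ≤ (n:ℝ) then (1:ℝ) else 0) :=
    Measurable.ite (measurableSet_le (by fun_prop) measurable_const) measurable_const
      measurable_const
  unfold Qker
  exact ((((measurable_const.mul (hiP1.mul hiP2)).div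
      (((hth1.mul hG).mul (hG.add measurable_const)).mul hth2)).sub
      ((hiP1.mul hiQ2).div ((hth1.mul (hG.add measurable_const)).mul hth2))).sub
      ((hiQ1.mul hiP2).div ((hth1.mul (hG.add measurable_const)).mul hth2))).sub
      ((hiQ1.mul hiQ2).div ((hth1.mul (hG.add measurable_const)).mul hth2))

end QkerAux

/-- The kernel `𝒬_{λ,n}` is square-integrable on `ℝ³ × ℝ³`, so the associated integral
operator is Hilbert–Schmidt on `L²(ℝ³)`. -/
theorem Qker_memL2
    (m lam : ℝ) (hm : 0 < m) (hlam : 0 < lam) (n : ℕ) (hn : 1 ≤ n) :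
    Integrable (fun pq : E3 × E3 => (Qker m lam n pq.1 pq.2) ^ 2) := by
  obtain ⟨C, hbd⟩ := QkerAux.Qker_sq_le hm hlam n hn
  have hH : Integrable (QkerAux.Hmaj n) := QkerAux.integrable_Hmaj n hn
  have hmaj : Integrable (fun pq : E3 × E3 => C * (QkerAux.Hmaj n pq.1 * QkerAux.Hmaj n pq.2)) := by
    rw [MeasureTheory.Measure.volume_eq_prod]
    exact (hH.mul_prod hH).const_mul C
  refine hmaj.mono' ((QkerAux.measurable_Qker m lam n).pow_const 2).aestronglyMeasurable ?_
  refine Filter.Eventually.of_forall fun pq => ?_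
  rw [Real.norm_of_nonneg (sq_nonneg _)]
  exact hbd pq.1 pq.2
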